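/- If G and H are finite groups with isomorphic enhanced power graphs, then their directed power graphs are isomorphic. -/

import Mathlib

open SimpleGraph

def enhancedPowerGraph (G : Type*) [Group G] : SimpleGraph G where
  Adj x y := x ≠ y ∧ ∃ z : G, x ∈ Subgroup.zpowers z ∧ y ∈ Subgroup.zpowers z
  symm := ⟨by rintro x y ⟨h, z, hx, hy⟩; exact ⟨h.symm, z, hy, hx⟩⟩
  loopless := ⟨by rintro x ⟨h, -⟩; exact h rfl⟩

def powerGraph (G : Type*) [Group G] : SimpleGraph G where
  Adj x y := x ≠ y ∧ (x ∈ Subgroup.zpowers y ∨ y ∈ Subgroup.zpowers x)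
  symm := ⟨by rintro x y ⟨h, hz⟩; exact ⟨h.symm, hz.symm⟩⟩
  loopless := ⟨by rintro x ⟨h, -⟩; exact h rfl⟩

def strongProd {α β : Type*} (Γ : SimpleGraph α) (Δ : SimpleGraph β) :
    SimpleGraph (α × β) where
  Adj p q := (p.1 = q.1 ∧ Δ.Adj p.2 q.2) ∨ (Γ.Adj p.1 q.1 ∧ p.2 = q.2) ∨
    (Γ.Adj p.1 q.1 ∧ Δ.Adj p.2 q.2)
  symm := ⟨by
    rintro ⟨a, b⟩ ⟨c, d⟩ (⟨h1, h2⟩ | ⟨h1, h2⟩ | ⟨h1, h2⟩)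
    · exact Or.inl ⟨h1.symm, h2.symm⟩
    · exact Or.inr (Or.inl ⟨h1.symm, h2.symm⟩)
    · exact Or.inr (Or.inr ⟨h1.symm, h2.symm⟩)⟩
  loopless := ⟨by
    rintro ⟨a, b⟩ (⟨-, h⟩ | ⟨h, -⟩ | ⟨h, -⟩) <;> exact h.ne rfl⟩

def graphAut {V : Type*} (Γ : SimpleGraph V) : Subgroup (Equiv.Perm V) where
  carrier := {σ | ∀ x y, Γ.Adj (σ x) (σ y) ↔ Γ.Adj x y}
  one_mem' := fun _ _ => Iff.rfl
  mul_mem' := by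
    intro σ τ hσ hτ x y
    simpa [Equiv.Perm.mul_apply] using (hσ (τ x) (τ y)).trans (hτ x y)
  inv_mem' := by
    intro σ hσ x y
    simpa using (hσ (σ⁻¹ x) (σ⁻¹ y)).symm

def IsMaxCyclic {G : Type*} [Group G] (C : Subgroup G) : Prop :=
  Maximal (fun K : Subgroup G => ∃ g : G, K = Subgroup.zpowers g) C

def closedNbhd {V : Type*} (Γ : SimpleGraph V) (x : V) : Set V :=
  Γ.neighborSet x ∪ {x}

/-
In the enhanced power graph of a finite group, the vertices whose closed neighbourhood contains
that of `x` form the intersection `cyclicCore x` of the maximal cyclic subgroups containing `x`.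
This is a cyclic subgroup, and `y ∈ ⟨x⟩` iff `y ∈ cyclicCore x` and `orderOf y ∣ orderOf x`.
A graph isomorphism `φ` carries `cyclicCore x` onto `cyclicCore (φ x)`, so the two are isomorphic
cyclic groups; sending `x` to its image under such an isomorphism gives an order-preserving
bijection which respects membership in the cyclic cores, hence the directed power graph.
-/

namespace SimpleGraph

variable {V W : Type*} {Γ : SimpleGraph V} {Δ : SimpleGraph W}

lemma mem_closedNbhd {x y : V} : y ∈ closedNbhd Γ x ↔ Γ.Adj x y ∨ y = x := Iff.rfl

def dominatorSet (Γ : SimpleGraph V) (x : V) : Set V := {y | closedNbhd Γ x ⊆ closedNbhd Γ y}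

lemma mem_dominatorSet_self (x : V) : x ∈ Γ.dominatorSet x :=
  Set.Subset.rfl

lemma mem_dominatorSet_iff_subset {x y : V} :
    y ∈ Γ.dominatorSet x ↔ Γ.dominatorSet y ⊆ Γ.dominatorSet x :=
  ⟨fun h _ hz => Set.Subset.trans h hz, fun h => h (mem_dominatorSet_self y)⟩

namespace Iso

lemma image_closedNbhd (φ : Γ ≃g Δ) (x : V) : φ '' closedNbhd Γ x = closedNbhd Δ (φ x) := by
  ext u
  obtain ⟨y, rfl⟩ := φ.surjective u
  rw [φ.injective.mem_set_image, mem_closedNbhd, mem_closedNbhd, φ.map_adj_iff,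
    φ.injective.eq_iff]

lemma image_dominatorSet (φ : Γ ≃g Δ) (x : V) :
    φ '' Γ.dominatorSet x = Δ.dominatorSet (φ x) := by
  ext u
  obtain ⟨y, rfl⟩ := φ.surjective u
  rw [φ.injective.mem_set_image]
  change closedNbhd Γ x ⊆ closedNbhd Γ y ↔ closedNbhd Δ (φ x) ⊆ closedNbhd Δ (φ y)
  rw [← image_closedNbhd, ← image_closedNbhd, Set.image_subset_image_iff φ.injective]

end Iso

end SimpleGraph

open Subgroup

section
variable {G : Type*} [Group G]

lemma mem_closedNbhd_enhancedPowerGraph {x y : G} :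
    y ∈ closedNbhd (enhancedPowerGraph G) x ↔ ∃ z, x ∈ zpowers z ∧ y ∈ zpowers z := by
  refine ⟨?_, fun h => ?_⟩
  · rintro (⟨-, h⟩ | rfl)
    exacts [h, ⟨y, mem_zpowers y, mem_zpowers y⟩]
  · rw [mem_closedNbhd, or_iff_not_imp_right]
    exact fun hne => ⟨Ne.symm hne, h⟩

lemma exists_isMaxCyclic_zpowers_le [Finite G] (g : G) : ∃ M, IsMaxCyclic M ∧ zpowers g ≤ M := by
  obtain ⟨M, hle, hM⟩ := Finite.exists_le_maximal
    (p := fun K : Subgroup G => ∃ g : G, K = zpowers g) ⟨g, rfl⟩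
  exact ⟨M, hM, hle⟩

lemma mem_dominatorSet_enhancedPowerGraph [Finite G] {x y : G} :
    y ∈ (enhancedPowerGraph G).dominatorSet x ↔ ∀ M, IsMaxCyclic M → x ∈ M → y ∈ M := by
  refine ⟨fun h M hM hx => ?_, fun h z hz => ?_⟩
  · obtain ⟨g, rfl⟩ := hM.1
    obtain ⟨w, hyw, hgw⟩ := mem_closedNbhd_enhancedPowerGraph.mp
      (h (mem_closedNbhd_enhancedPowerGraph.mpr ⟨g, hx, mem_zpowers g⟩))
    exact hM.2 ⟨w, rfl⟩ (zpowers_le.mpr hgw) hyw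
  · obtain ⟨w, hxw, hzw⟩ := mem_closedNbhd_enhancedPowerGraph.mp hz
    obtain ⟨M, hM, hwM⟩ := exists_isMaxCyclic_zpowers_le w
    obtain ⟨g, rfl⟩ := hM.1
    exact mem_closedNbhd_enhancedPowerGraph.mpr ⟨g, h _ hM (hwM hxw), hwM hzw⟩

def cyclicCore (x : G) : Subgroup G := ⨅ (M : Subgroup G) (_ : IsMaxCyclic M) (_ : x ∈ M), M

lemma mem_cyclicCore {x y : G} : y ∈ cyclicCore x ↔ ∀ M, IsMaxCyclic M → x ∈ M → y ∈ M := by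
  simp only [cyclicCore, mem_iInf]

lemma mem_cyclicCore_self (x : G) : x ∈ cyclicCore x := mem_cyclicCore.mpr fun _ _ hx => hx

lemma mem_cyclicCore_iff_le {x y : G} : y ∈ cyclicCore x ↔ cyclicCore y ≤ cyclicCore x :=
  ⟨fun h _ hz => mem_cyclicCore.mpr fun M hM hx => mem_cyclicCore.mp hz M hM
    (mem_cyclicCore.mp h M hM hx), fun h => h (mem_cyclicCore_self y)⟩

lemma coe_cyclicCore [Finite G] (x : G) :
    (cyclicCore x : Set G) = (enhancedPowerGraph G).dominatorSet x := by
  ext y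
  exact mem_cyclicCore.trans mem_dominatorSet_enhancedPowerGraph.symm

instance [Finite G] (x : G) : IsCyclic (cyclicCore x) := by
  obtain ⟨M, hM, hxM⟩ := exists_isMaxCyclic_zpowers_le x
  obtain ⟨g, rfl⟩ := hM.1
  exact isCyclic_of_le fun y hy => mem_cyclicCore.mp hy _ hM (hxM (mem_zpowers x))

end

lemma Subgroup.mem_of_orderOf_dvd_natCard {G : Type*} [Group G] {A C : Subgroup G} [IsCyclic C]
    [Finite C] (hAC : A ≤ C) {g : G} (hg : g ∈ C) (hdvd : orderOf g ∣ Nat.card A) : g ∈ A := by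
  classical
  have := Fintype.ofFinite C
  have : Finite A := Finite.of_injective _ (inclusion_injective hAC)
  let A' := A.subgroupOf C
  have hcard : Nat.card A' = Nat.card A := Nat.card_congr (subgroupOfEquivOfLe hAC).toEquiv
  let roots : Finset C := {a | a ^ Nat.card A = 1}
  -- a cyclic group has at most `n` solutions of `a ^ n = 1`, and `A'` already provides `n`
  have hroots : (A' : Set C).toFinset = roots := by
    refine Finset.eq_of_subset_of_card_le (fun a ha => ?_) ?_
    · rw [Set.mem_toFinset] at ha
      have := congrArg Subtype.val (pow_card_eq_one' (x := (⟨a, ha⟩ : A')))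
      rw [hcard] at this
      simpa only [roots, Finset.mem_filter, Finset.mem_univ, true_and, SubgroupClass.coe_pow,
        OneMemClass.coe_one] using this
    · rw [Set.toFinset_card, ← Nat.card_eq_fintype_card, SetLike.coe_sort_coe, hcard]
      exact IsCyclic.card_pow_eq_one_le Nat.card_pos
  have hmem : (⟨g, hg⟩ : C) ∈ roots := by
    simp only [roots, Finset.mem_filter, Finset.mem_univ, true_and]
    exact Subtype.ext (orderOf_dvd_iff_pow_eq_one.mp hdvd)
  rw [← hroots, Set.mem_toFinset] at hmem
  exact mem_subgroupOf.mp hmem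

lemma eq_of_coe_mulEquivOfCyclicCardEq_eq {G H : Type*} [Group G] [Group H] {C C' : Subgroup G}
    {D D' : Subgroup H} [IsCyclic C] [IsCyclic C'] [IsCyclic D] [IsCyclic D'] (hC : C = C')
    (hD : D = D') (h : Nat.card C = Nat.card D) (h' : Nat.card C' = Nat.card D') {a : C} {a' : C'}
    (heq : (mulEquivOfCyclicCardEq h a : H) = mulEquivOfCyclicCardEq h' a') : (a : G) = a' := by
  subst hC hD
  exact congrArg Subtype.val ((mulEquivOfCyclicCardEq h).injective (Subtype.ext heq))

section
variable {G : Type*} [Group G] [Finite G]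

theorem mem_zpowers_iff_mem_cyclicCore {x y : G} :
    y ∈ zpowers x ↔ y ∈ cyclicCore x ∧ orderOf y ∣ orderOf x := by
  have hle : zpowers x ≤ cyclicCore x := zpowers_le.mpr (mem_cyclicCore_self x)
  refine ⟨fun h => ⟨hle h, orderOf_dvd_of_mem_zpowers h⟩, fun ⟨hy, hdvd⟩ => ?_⟩
  exact Subgroup.mem_of_orderOf_dvd_natCard hle hy (by rwa [Nat.card_zpowers])

variable {H : Type*} [Group H] [Finite H] (φ : enhancedPowerGraph G ≃g enhancedPowerGraph H)

lemma coe_cyclicCore_map (x : G) : (cyclicCore (φ x) : Set H) = φ '' cyclicCore x := by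
  rw [coe_cyclicCore, coe_cyclicCore, φ.image_dominatorSet]

lemma cyclicCore_map_le_iff {x y : G} :
    cyclicCore (φ y) ≤ cyclicCore (φ x) ↔ cyclicCore y ≤ cyclicCore x := by
  rw [← SetLike.coe_subset_coe, coe_cyclicCore_map, coe_cyclicCore_map,
    Set.image_subset_image_iff φ.injective, SetLike.coe_subset_coe]

lemma natCard_cyclicCore_map (x : G) : Nat.card (cyclicCore (φ x)) = Nat.card (cyclicCore x) := by
  rw [← SetLike.coe_sort_coe, coe_cyclicCore_map]
  exact Nat.card_image_of_injective φ.injective _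

noncomputable def cyclicTransfer (x : G) : H :=
  mulEquivOfCyclicCardEq (natCard_cyclicCore_map φ x).symm ⟨x, mem_cyclicCore_self x⟩

lemma cyclicTransfer_mem (x : G) : cyclicTransfer φ x ∈ cyclicCore (φ x) := SetLike.coe_mem _

lemma orderOf_cyclicTransfer (x : G) : orderOf (cyclicTransfer φ x) = orderOf x := by
  rw [cyclicTransfer, orderOf_coe, MulEquiv.orderOf_eq, orderOf_mk]

lemma cyclicCore_cyclicTransfer (x : G) : cyclicCore (cyclicTransfer φ x) = cyclicCore (φ x) := by
  obtain ⟨w, hw, hφw⟩ : cyclicTransfer φ x ∈ φ '' cyclicCore x := by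
    rw [← coe_cyclicCore_map]; exact cyclicTransfer_mem φ x
  have hwx : cyclicCore w ≤ cyclicCore x := mem_cyclicCore_iff_le.mp hw
  have hdvd : orderOf x ∣ Nat.card (cyclicCore w) := by
    rw [← orderOf_cyclicTransfer φ x, ← natCard_cyclicCore_map φ w, hφw]
    exact orderOf_dvd_natCard _ (mem_cyclicCore_self _)
  have hxw : cyclicCore x ≤ cyclicCore w := mem_cyclicCore_iff_le.mp
    (Subgroup.mem_of_orderOf_dvd_natCard hwx (mem_cyclicCore_self x) hdvd)
  rw [← hφw]
  exact le_antisymm ((cyclicCore_map_le_iff φ).mpr hwx) ((cyclicCore_map_le_iff φ).mpr hxw)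

lemma cyclicTransfer_mem_cyclicCore_iff {x y : G} :
    cyclicTransfer φ y ∈ cyclicCore (cyclicTransfer φ x) ↔ y ∈ cyclicCore x := by
  rw [mem_cyclicCore_iff_le, mem_cyclicCore_iff_le, cyclicCore_cyclicTransfer,
    cyclicCore_cyclicTransfer, cyclicCore_map_le_iff]

lemma cyclicTransfer_injective : Function.Injective (cyclicTransfer φ) := by
  intro x x' h
  have hφ : cyclicCore (φ x) = cyclicCore (φ x') := by
    rw [← cyclicCore_cyclicTransfer, ← cyclicCore_cyclicTransfer, h]
  have hcore : cyclicCore x = cyclicCore x' :=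
    le_antisymm ((cyclicCore_map_le_iff φ).mp hφ.le) ((cyclicCore_map_le_iff φ).mp hφ.ge)
  -- the isomorphism defining `cyclicTransfer φ x` depends on `x` only through these two cores
  exact eq_of_coe_mulEquivOfCyclicCardEq_eq hcore hφ _ _ h

lemma cyclicTransfer_bijective : Function.Bijective (cyclicTransfer φ) :=
  (cyclicTransfer_injective φ).bijective_of_nat_card_le (Nat.card_congr φ.toEquiv).ge

end

theorem stmt_9 {G H : Type*} [Group G] [Group H] [Fintype G] [Fintype H]
    (h : Nonempty (enhancedPowerGraph G ≃g enhancedPowerGraph H)) :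
    ∃ e : G ≃ H, ∀ x y : G,
      (x ≠ y ∧ y ∈ Subgroup.zpowers x) ↔ (e x ≠ e y ∧ e y ∈ Subgroup.zpowers (e x)) := by
  obtain ⟨φ⟩ := h
  refine ⟨Equiv.ofBijective _ (cyclicTransfer_bijective φ), fun x y => ?_⟩
  simp only [Equiv.ofBijective_apply, (cyclicTransfer_injective φ).ne_iff,
    mem_zpowers_iff_mem_cyclicCore, cyclicTransfer_mem_cyclicCore_iff, orderOf_cyclicTransfer]
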